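/- Let 𝒪 be an order ideal in P = K[x_0,…,x_n] and let G be a homogeneous ∂𝒪-basis of a homogeneous ideal J ⊆ P. Then J_d = (G)_d for every d ≥ 0, and J = (G). -/

import Mathlib

open MvPolynomial

namespace Border

/-- A term of `K[x_0, …, x_n]`, identified with its exponent vector. -/
abbrev Term (n : ℕ) := Fin (n + 1) →₀ ℕ

variable {n : ℕ}

/-- The (standard) degree of a term. -/
def tdeg (m : Term n) : ℕ := ∑ i, m i

/-- An order ideal: a nonempty set of terms closed under divisors. -/
def IsOrderIdeal (O : Set (Term n)) : Prop :=
  O.Nonempty ∧ ∀ τ ∈ O, ∀ τ' : Term n, τ' ≤ τ → τ' ∈ O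

/-- The border `∂𝒪 = (x_0·𝒪 ∪ ⋯ ∪ x_n·𝒪) ∖ 𝒪`. -/
def border (O : Set (Term n)) : Set (Term n) :=
  {σ | σ ∉ O ∧ ∃ r : Fin (n + 1), ∃ τ ∈ O, σ = τ + Finsupp.single r 1}

/-- Multiplicative set of a border term `σ`, with respect to a labeling `lab` of the border:
`𝒯_σ = {η : σ' ∤ η·σ for every border term σ' with a larger label}`. -/
def mulSet (O : Set (Term n)) (lab : Term n → ℕ) (σ : Term n) : Set (Term n) :=
  {η | ∀ σ' ∈ border O, lab σ < lab σ' → ¬ σ' ≤ η + σ}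

/-- The cone `C(σ) = {η·σ : η ∈ 𝒯_σ}`. -/
def cone (O : Set (Term n)) (lab : Term n → ℕ) (σ : Term n) : Set (Term n) :=
  (fun η => η + σ) '' mulSet O lab σ

/-- A labeling of the border which is injective and ordered increasingly by degree. -/
def DegOrderedLabeling (O : Set (Term n)) (lab : Term n → ℕ) : Prop :=
  Set.InjOn lab (border O) ∧
    ∀ σ ∈ border O, ∀ σ' ∈ border O, lab σ < lab σ' → tdeg σ ≤ tdeg σ'

/-- Iterated border closures: `∂⁰𝒪 := 𝒪`, and the `(k+1)`-st closure adds the border. -/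
def borderClosure (O : Set (Term n)) : ℕ → Set (Term n)
  | 0 => O
  | k + 1 => borderClosure O k ∪ border (borderClosure O k)

/-- The index `ind_𝒪(τ)`: the least `k` with `τ ∈ ∂^k𝒪`. -/
noncomputable def ind (O : Set (Term n)) (τ : Term n) : ℕ :=
  sInf {k | τ ∈ borderClosure O k}

/-- Degree-`d` part of a set of terms. -/
def Od (O : Set (Term n)) (d : ℕ) : Set (Term n) := {τ | τ ∈ O ∧ tdeg τ = d}

variable {K : Type*} [Field K]

/-- The index of a nonzero polynomial: the maximal index of a term of its support. -/
noncomputable def indP (O : Set (Term n)) (f : MvPolynomial (Fin (n + 1)) K) : ℕ :=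
  f.support.sup (ind O)

/-- A homogeneous `∂𝒪`-prebasis: a family `g σ = σ - Σ_{τ ∈ 𝒪_{deg σ}} c_{στ} τ`. -/
def IsPrebasis (O : Set (Term n)) (g : Term n → MvPolynomial (Fin (n + 1)) K) : Prop :=
  ∀ σ ∈ border O, ∀ τ ∈ (monomial σ (1 : K) - g σ).support, τ ∈ O ∧ tdeg τ = tdeg σ

/-- The set of border reductors `𝒯G = {η·g_σ : σ ∈ ∂𝒪, η ∈ 𝒯_σ}`. -/
def reductors (O : Set (Term n)) (lab : Term n → ℕ)
    (g : Term n → MvPolynomial (Fin (n + 1)) K) : Set (MvPolynomial (Fin (n + 1)) K) :=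
  {p | ∃ σ ∈ border O, ∃ η ∈ mulSet O lab σ, p = monomial η (1 : K) * g σ}

/-- The degree-`d` border reductors `𝒯G_d = 𝒯G ∩ P_d`. -/
def reductorsDeg (O : Set (Term n)) (lab : Term n → ℕ)
    (g : Term n → MvPolynomial (Fin (n + 1)) K) (d : ℕ) :
    Set (MvPolynomial (Fin (n + 1)) K) :=
  reductors O lab g ∩ {p | p.IsHomogeneous d}

/-- One step of the border reduction relation `→_G`. -/
def Step (O : Set (Term n)) (lab : Term n → ℕ)
    (g : Term n → MvPolynomial (Fin (n + 1)) K)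
    (f h : MvPolynomial (Fin (n + 1)) K) : Prop :=
  ∃ σ ∈ border O, ∃ η ∈ mulSet O lab σ, η + σ ∈ f.support ∧
    h = f - f.coeff (η + σ) • (monomial η (1 : K) * g σ)

/-- The border reduction relation `→⁺_G` (finitely many, possibly zero, steps). -/
def Reduces (O : Set (Term n)) (lab : Term n → ℕ)
    (g : Term n → MvPolynomial (Fin (n + 1)) K) :
    MvPolynomial (Fin (n + 1)) K → MvPolynomial (Fin (n + 1)) K → Prop :=
  Relation.ReflTransGen (Step O lab g)

/-- The `K`-vector space spanned by a set of terms. -/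
noncomputable def spanTerms (K : Type*) [Field K] (S : Set (Term n)) :
    Submodule K (MvPolynomial (Fin (n + 1)) K) :=
  Submodule.span K ((fun τ => monomial τ (1 : K)) '' S)

/-- The ideal `(G)` generated by a `∂𝒪`-prebasis. -/
noncomputable def idealG (O : Set (Term n)) (g : Term n → MvPolynomial (Fin (n + 1)) K) :
    Ideal (MvPolynomial (Fin (n + 1)) K) :=
  Ideal.span (g '' border O)

/-- The degree-`d` part `I_d` of an ideal, as a `K`-vector subspace. -/
noncomputable def degPart (I : Ideal (MvPolynomial (Fin (n + 1)) K)) (d : ℕ) :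
    Submodule K (MvPolynomial (Fin (n + 1)) K) :=
  Submodule.restrictScalars K I ⊓ homogeneousSubmodule (Fin (n + 1)) K d

/-- Homogeneous ideal. -/
def IsHomogeneousIdeal (I : Ideal (MvPolynomial (Fin (n + 1)) K)) : Prop :=
  ∀ f ∈ I, ∀ d : ℕ, homogeneousComponent d f ∈ I

/-- `G` is a homogeneous `∂𝒪`-basis of `J`: it is a prebasis contained in `J` and for every
`d` one has `P_d = J_d ⊕ ⟨𝒪_d⟩`, i.e. the residue classes of `𝒪_d` are a basis of `P_d/J_d`. -/
def IsBorderBasisOf (O : Set (Term n)) (g : Term n → MvPolynomial (Fin (n + 1)) K)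
    (J : Ideal (MvPolynomial (Fin (n + 1)) K)) : Prop :=
  IsPrebasis O g ∧ (∀ σ ∈ border O, g σ ∈ J) ∧
    ∀ d : ℕ, degPart J d ⊔ spanTerms K (Od O d) = homogeneousSubmodule (Fin (n + 1)) K d ∧
      Disjoint (degPart J d) (spanTerms K (Od O d))

/-- An `m`-lower representation of `f` by `𝒯G`: `f = Σ c_j • η_j·g_{σ_j}` with distinct
pairs `(η_j, σ_j)`, `η_j ∈ 𝒯_{σ_j}` and `ind(η_j σ_j) ≤ m`. -/
def HasLRep (O : Set (Term n)) (lab : Term n → ℕ)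
    (g : Term n → MvPolynomial (Fin (n + 1)) K)
    (f : MvPolynomial (Fin (n + 1)) K) (m : ℕ) : Prop :=
  ∃ (s : Finset (Term n × Term n)) (c : Term n × Term n → K),
    (∀ p ∈ s, p.2 ∈ border O ∧ p.1 ∈ mulSet O lab p.2 ∧ ind O (p.1 + p.2) ≤ m) ∧
    f = ∑ p ∈ s, c p • (monomial p.1 (1 : K) * g p.2)

/-- An `m`-lower representation of `f` by `𝒯G_d`. -/
def HasLRepDeg (O : Set (Term n)) (lab : Term n → ℕ)
    (g : Term n → MvPolynomial (Fin (n + 1)) K)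
    (f : MvPolynomial (Fin (n + 1)) K) (m d : ℕ) : Prop :=
  ∃ (s : Finset (Term n × Term n)) (c : Term n × Term n → K),
    (∀ p ∈ s, p.2 ∈ border O ∧ p.1 ∈ mulSet O lab p.2 ∧ ind O (p.1 + p.2) ≤ m ∧
      (monomial p.1 (1 : K) * g p.2).IsHomogeneous d) ∧
    f = ∑ p ∈ s, c p • (monomial p.1 (1 : K) * g p.2)

/-- The subtype of terms of `𝒪` of degree `d`. -/
abbrev OdSub (O : Set (Term n)) (d : ℕ) : Type _ := {τ : Term n // τ ∈ Od O d}

lemma tdeg_component_lt {d : ℕ} (m : Term n) (h : tdeg m = d) (i : Fin (n + 1)) :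
    m i < d + 1 := by
  have : m i ≤ tdeg m :=
    Finset.single_le_sum (f := fun j => m j) (fun j _ => Nat.zero_le _) (Finset.mem_univ i)
  omega

instance (O : Set (Term n)) (d : ℕ) : Finite (OdSub O d) := by
  have hinj : Function.Injective
      (fun τ : OdSub O d => fun i : Fin (n + 1) =>
        (⟨τ.1 i, tdeg_component_lt τ.1 τ.2.2 i⟩ : Fin (d + 1))) := by
    intro a b hab
    apply Subtype.ext
    apply Finsupp.ext
    intro i
    simpa using congrArg Fin.val (congrFun hab i)
  exact Finite.of_injective _ hinj

noncomputable instance (O : Set (Term n)) (d : ℕ) : Fintype (OdSub O d) :=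
  Fintype.ofFinite _

open scoped Classical in
/-- The `r`-th `d`-graded formal multiplication matrix of a prebasis `G`,
with rows indexed by `𝒪_{d+1}` and columns by `𝒪_d`. -/
noncomputable def multMatrix (O : Set (Term n))
    (g : Term n → MvPolynomial (Fin (n + 1)) K) (r : Fin (n + 1)) (d : ℕ) :
    Matrix (OdSub O (d + 1)) (OdSub O d) K :=
  Matrix.of fun τ' τ =>
    if τ.1 + Finsupp.single r 1 ∈ O then
      (if τ.1 + Finsupp.single r 1 = τ'.1 then 1 else 0)
    else (monomial (τ.1 + Finsupp.single r 1) (1 : K)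
            - g (τ.1 + Finsupp.single r 1)).coeff τ'.1

/-- The minimum degree of a border term. -/
noncomputable def minDegBorder (O : Set (Term n)) : ℕ := sInf (tdeg '' border O)

/-- The `d`-th Macaulay transformation `a^{⟨d⟩}`, computed greedily. -/
noncomputable def macaulay : ℕ → ℕ → ℕ
  | 0, _ => 0
  | d + 1, a =>
    if a = 0 then 0
    else
      Nat.choose (sSup {k | Nat.choose k (d + 1) ≤ a} + 1) (d + 2) +
        macaulay d (a - Nat.choose (sSup {k | Nat.choose k (d + 1) ≤ a}) (d + 1))

/-- An ideal is generated in degrees `≤ m` if it is generated by its homogeneous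
elements of degree `≤ m`. -/
def GeneratedInDegLE (I : Ideal (MvPolynomial (Fin (n + 1)) K)) (m : ℕ) : Prop :=
  I = Ideal.span {f | f ∈ I ∧ ∃ d ≤ m, f.IsHomogeneous d}

/-!
Every term `t` of degree `d` lies in `(G)_d + ⟨𝒪_d⟩`. By induction on `t`: if `t ∉ 𝒪` then
`t = x_r·t'`, and multiplication by `x_r` maps `(G)_{d-1}` into `(G)_d` and each term of
`𝒪_{d-1}` either into `𝒪_d` or onto a border term `σ = g_σ + (σ - g_σ)`, where `σ - g_σ ∈ ⟨𝒪_d⟩`.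
As `(G) ⊆ J` and `J_d ∩ ⟨𝒪_d⟩ = 0`, this forces `J_d = (G)_d`; since `J` is homogeneous, `J = (G)`.
-/

lemma tdeg_eq_degree (t : Term n) : tdeg t = t.degree :=
  (Finset.sum_subset (Finset.subset_univ _) fun _ _ hi => Finsupp.notMem_support_iff.mp hi).symm

lemma tdeg_add_single (t : Term n) (r : Fin (n + 1)) :
    tdeg (t + Finsupp.single r 1) = tdeg t + 1 := by
  simp only [tdeg_eq_degree, map_add, Finsupp.degree_single]

lemma monomial_add_single_one (t : Term n) (r : Fin (n + 1)) :
    monomial (t + Finsupp.single r 1) (1 : K) = X r * monomial t 1 := by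
  rw [add_comm t, monomial_single_add, pow_one]

lemma IsOrderIdeal.zero_mem {O : Set (Term n)} (hO : IsOrderIdeal O) : (0 : Term n) ∈ O := by
  obtain ⟨τ, hτ⟩ := hO.1
  exact hO.2 τ hτ 0 zero_le

lemma spanTerms_eq_supported (S : Set (Term n)) :
    spanTerms K S = AddMonoidAlgebra.supported K K S := by
  rw [AddMonoidAlgebra.supported_eq_span_single]
  rfl

lemma mem_spanTerms_iff {p : MvPolynomial (Fin (n + 1)) K} {S : Set (Term n)} :
    p ∈ spanTerms K S ↔ ↑p.support ⊆ S := by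
  rw [spanTerms_eq_supported]
  rfl

lemma monomial_mem_spanTerms {S : Set (Term n)} {t : Term n} (ht : t ∈ S) :
    monomial t (1 : K) ∈ spanTerms K S :=
  Submodule.subset_span ⟨t, ht, rfl⟩

lemma spanTerms_Od_le_homogeneousSubmodule (O : Set (Term n)) (d : ℕ) :
    spanTerms K (Od O d) ≤ homogeneousSubmodule (Fin (n + 1)) K d := by
  rw [spanTerms_eq_supported, homogeneousSubmodule_eq_finsupp_supported]
  refine AddMonoidAlgebra.supported_mono fun t ht => ?_
  rw [Set.mem_ofPred_eq, ← tdeg_eq_degree]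
  exact ht.2

lemma degPart_mono {I I' : Ideal (MvPolynomial (Fin (n + 1)) K)} (h : I ≤ I') (d : ℕ) :
    degPart I d ≤ degPart I' d :=
  inf_le_inf_right _ h

lemma X_mul_mem_degPart {I : Ideal (MvPolynomial (Fin (n + 1)) K)} {d : ℕ}
    {f : MvPolynomial (Fin (n + 1)) K} (hf : f ∈ degPart I d) (r : Fin (n + 1)) :
    X r * f ∈ degPart I (d + 1) := by
  obtain ⟨hfI, hfd⟩ := Submodule.mem_inf.mp hf
  refine Submodule.mem_inf.mpr ⟨I.mul_mem_left (X r) hfI, ?_⟩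
  exact (mem_homogeneousSubmodule _ _).mpr <| add_comm 1 d ▸ (isHomogeneous_X K r).mul hfd

lemma le_of_degPart_le {I I' : Ideal (MvPolynomial (Fin (n + 1)) K)} (hI : IsHomogeneousIdeal I)
    (h : ∀ d, degPart I d ≤ degPart I' d) : I ≤ I' := by
  intro f hf
  rw [← f.sum_homogeneousComponent]
  refine Submodule.sum_mem _ fun d _ => (Submodule.mem_inf.mp (h d ?_)).1
  exact Submodule.mem_inf.mpr ⟨hI f hf d, homogeneousComponent_isHomogeneous d f⟩

section Prebasis

variable {O : Set (Term n)} {g : Term n → MvPolynomial (Fin (n + 1)) K}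

lemma IsPrebasis.monomial_sub_mem_spanTerms (hpre : IsPrebasis O g) {σ : Term n}
    (hσ : σ ∈ border O) : monomial σ (1 : K) - g σ ∈ spanTerms K (Od O (tdeg σ)) :=
  mem_spanTerms_iff.mpr fun τ hτ => hpre σ hσ τ hτ

lemma IsPrebasis.mem_degPart_idealG (hpre : IsPrebasis O g) {σ : Term n}
    (hσ : σ ∈ border O) : g σ ∈ degPart (idealG O g) (tdeg σ) := by
  have hmon : monomial σ (1 : K) ∈ homogeneousSubmodule (Fin (n + 1)) K (tdeg σ) :=
    isHomogeneous_monomial _ (tdeg_eq_degree σ).symm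
  have hsub := spanTerms_Od_le_homogeneousSubmodule O _ (hpre.monomial_sub_mem_spanTerms hσ)
  refine Submodule.mem_inf.mpr ⟨Ideal.subset_span ⟨σ, hσ, rfl⟩, ?_⟩
  simpa only [sub_sub_cancel] using Submodule.sub_mem _ hmon hsub

lemma IsPrebasis.monomial_mem_sup_of_mem_border (hpre : IsPrebasis O g) {σ : Term n}
    (hσ : σ ∈ border O) :
    monomial σ (1 : K) ∈ degPart (idealG O g) (tdeg σ) ⊔ spanTerms K (Od O (tdeg σ)) := by
  rw [← add_sub_cancel (g σ) (monomial σ (1 : K))]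
  exact Submodule.add_mem_sup (hpre.mem_degPart_idealG hσ) (hpre.monomial_sub_mem_spanTerms hσ)

lemma IsPrebasis.map_mulLeft_X_le (hpre : IsPrebasis O g) (r : Fin (n + 1)) (d : ℕ) :
    (degPart (idealG O g) d ⊔ spanTerms K (Od O d)).map (LinearMap.mulLeft K (X r)) ≤
      degPart (idealG O g) (d + 1) ⊔ spanTerms K (Od O (d + 1)) := by
  rw [Submodule.map_sup]
  refine sup_le (le_sup_of_le_left
    (Submodule.map_le_iff_le_comap.mpr fun f hf => X_mul_mem_degPart hf r)) ?_
  rw [spanTerms, Submodule.map_span_le]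
  rintro _ ⟨τ, ⟨hτO, rfl⟩, rfl⟩
  rw [LinearMap.mulLeft_apply, ← monomial_add_single_one, ← tdeg_add_single τ r]
  by_cases hO : τ + Finsupp.single r 1 ∈ O
  · exact Submodule.mem_sup_right (monomial_mem_spanTerms ⟨hO, rfl⟩)
  · exact hpre.monomial_mem_sup_of_mem_border ⟨hO, r, τ, hτO, rfl⟩

lemma IsPrebasis.monomial_mem_sup (hO : IsOrderIdeal O) (hpre : IsPrebasis O g) (t : Term n) :
    monomial t (1 : K) ∈ degPart (idealG O g) (tdeg t) ⊔ spanTerms K (Od O (tdeg t)) := by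
  induction t using WellFoundedLT.induction with
  | _ t ih =>
  by_cases htO : t ∈ O
  · exact Submodule.mem_sup_right (monomial_mem_spanTerms ⟨htO, rfl⟩)
  obtain ⟨r, hr⟩ := Finsupp.support_nonempty_iff.mpr (ne_of_mem_of_not_mem hO.zero_mem htO).symm
  obtain ⟨t', rfl⟩ : ∃ t', t = t' + Finsupp.single r 1 :=
    le_iff_exists_add'.mp (Finsupp.single_le_iff.mpr (Nat.one_le_iff_ne_zero.mpr
      (Finsupp.mem_support_iff.mp hr)))
  have hlt : t' < t' + Finsupp.single r 1 :=
    lt_add_of_pos_right t' (pos_iff_ne_zero.mpr (Finsupp.single_ne_zero.mpr one_ne_zero))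
  rw [tdeg_add_single, monomial_add_single_one]
  exact hpre.map_mulLeft_X_le r _
    (Submodule.mem_map_of_mem (f := LinearMap.mulLeft K (X r)) (ih t' hlt))

lemma IsPrebasis.homogeneousSubmodule_le_sup (hO : IsOrderIdeal O) (hpre : IsPrebasis O g)
    (d : ℕ) : homogeneousSubmodule (Fin (n + 1)) K d ≤
      degPart (idealG O g) d ⊔ spanTerms K (Od O d) := by
  rw [homogeneousSubmodule_eq_finsupp_supported, AddMonoidAlgebra.supported_eq_span_single,
    Submodule.span_le]
  rintro _ ⟨t, ht, rfl⟩
  rw [Set.mem_ofPred_eq, ← tdeg_eq_degree] at ht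
  exact ht ▸ hpre.monomial_mem_sup hO t

end Prebasis

/-- **A border basis generates.** If `G` is a homogeneous `∂𝒪`-basis of a homogeneous
ideal `J`, then `J_d = (G)_d` for every `d` and `J = (G)`. -/
theorem borderBasis_generates (O : Set (Term n)) (hO : IsOrderIdeal O)
    (g : Term n → MvPolynomial (Fin (n + 1)) K)
    (J : Ideal (MvPolynomial (Fin (n + 1)) K)) (hJ : IsHomogeneousIdeal J)
    (hbasis : IsBorderBasisOf O g J) :
    (∀ d : ℕ, degPart J d = degPart (idealG O g) d) ∧ J = idealG O g := by
  obtain ⟨hpre, hgJ, hdirect⟩ := hbasis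
  have hGJ : idealG O g ≤ J := Ideal.span_le.mpr fun _ ⟨σ, hσ, hgσ⟩ => hgσ ▸ hgJ σ hσ
  have hdeg (d : ℕ) : degPart J d = degPart (idealG O g) d :=
    (eq_of_le_of_inf_le_of_le_sup (degPart_mono hGJ d)
      ((hdirect d).2.le_bot.trans bot_le)
      (inf_le_right.trans (hpre.homogeneousSubmodule_le_sup hO d))).symm
  exact ⟨hdeg, le_antisymm (le_of_degPart_le hJ fun d => (hdeg d).le) hGJ⟩

end Border
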